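/- Let Δ ∈ ℝ^{n×n} be symmetric with GWM A = nΔ, and let h : ℝ → ℝ be continuous. Then for every signal x ∈ ℂⁿ one has ψ_{h(Δ)x} = h(T_{W_A}) ψ_x in L²[0,1]. -/

import Mathlib

open MeasureTheory Filter

noncomputable section

/-- Lebesgue measure restricted to `[0,1]`. -/
abbrev μ01 : Measure ℝ := volume.restrict (Set.Icc 0 1)

instance : IsFiniteMeasure μ01 := by
  constructor
  rw [Measure.restrict_apply_univ, Real.volume_Icc]
  exact ENNReal.ofReal_lt_top

/-- The space `L²[0,1]` (complex valued). -/
abbrev L2 := Lp ℂ 2 μ01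

/-- The real continuous functional calculus on operators of `L2` (the generic instance is no
longer found by unification, as `L2` carries its own `ℝ`-module structure). -/
instance L2.instCFCReal : ContinuousFunctionalCalculus ℝ (L2 →L[ℂ] L2) IsSelfAdjoint :=
  IsSelfAdjoint.instContinuousFunctionalCalculus

/-- The `j`-th interval `P_j = [j/n, (j+1)/n)` of the standard partition of `[0,1]`
(0-indexed version of `[(j-1)/n, j/n)`). -/

def part (n : ℕ) (j : Fin n) : Set ℝ := Set.Ico ((j : ℝ) / n) (((j : ℝ) + 1) / n)

lemma part_meas (n : ℕ) (j : Fin n) : MeasurableSet (part n j) := measurableSet_Ico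

lemma part_ne_top (n : ℕ) (j : Fin n) : μ01 (part n j) ≠ ⊤ := (measure_lt_top _ _).ne

/-- The graphon `W_B` induced by an `n × n` matrix `B`:
`W_B(u,v) = ∑_{i,j} B i j · 1_{P_i}(u) · 1_{P_j}(v)`. -/

def inducedGraphon {n : ℕ} (B : Matrix (Fin n) (Fin n) ℝ) : ℝ → ℝ → ℝ :=
  fun u v => ∑ i, ∑ j, B i j * (part n i).indicator 1 u * (part n j).indicator 1 v

/-- The graphon signal `ψ_x = ∑_j x_j · 1_{P_j} ∈ L²[0,1]` induced by `x ∈ ℂⁿ`. -/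

def inducedSignal {n : ℕ} (x : Fin n → ℂ) : L2 :=
  ∑ j, indicatorConstLp 2 (part_meas n j) (part_ne_top n j) (x j)

/-- `W` is a graphon: bounded, symmetric and measurable `[0,1]² → ℝ`
(realized as a function on all of `ℝ²`; only its values matter w.r.t. `μ01`). -/
structure IsGraphon (W : ℝ → ℝ → ℝ) : Prop where
  symm : ∀ u v, W u v = W v u
  meas : Measurable (Function.uncurry W)
  bdd : ∃ C, ∀ u v, |W u v| ≤ C

/-- `T` is the graphon shift operator of `W`: `(T f)(v) = ∫₀¹ W(v,u) f(u) du`. -/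

def IsGRSO (W : ℝ → ℝ → ℝ) (T : L2 →L[ℂ] L2) : Prop :=
  ∀ f : L2, ∀ᵐ v ∂μ01, T f v = ∫ u, (W v u : ℂ) * f u ∂μ01

/-- Entrywise complexification of a real activation function. -/

def rhoC (ρ : ℝ → ℝ) (z : ℂ) : ℂ := (ρ z.re : ℂ) + (ρ z.im : ℂ) * Complex.I

/-- The realization of an SCNN (filters `filt`, weights `wt`, activation `ρ`) on a graph with
GSO `Δ`: `graphNet F filt wt ρ Δ x l j` is the `j`-th feature of the `l`-th layer, on input
feature map `x`.  Layer `l+1` is obtained from layer `l` via the filters `filt l j k`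
and weights `wt l j k`. -/

def graphNet (F : ℕ → ℕ) (filt : ℕ → ℕ → ℕ → ℝ → ℝ) (wt : ℕ → ℕ → ℕ → ℝ)
    (ρ : ℝ → ℝ) {n : ℕ} (Δ : Matrix (Fin n) (Fin n) ℝ) (x : ℕ → Fin n → ℂ) :
    ℕ → ℕ → Fin n → ℂ
  | 0, j => x j
  | (l + 1), j => fun v =>
      rhoC ρ (∑ k ∈ Finset.range (F l),
        (wt l j k : ℂ) * (((cfc (filt l j k) Δ).map Complex.ofReal).mulVec
          (graphNet F filt wt ρ Δ x l k)) v)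

/-- `y` is a realization of the SCNN (filters `filt`, weights `wt`, activation `ρ`,
`Lnum` layers, feature dimensions `F`) on the graphon shift operator `T`:
`y l j` is the `j`-th feature of the `l`-th layer, and each layer is obtained from the
previous one by filtering with `cfc (filt l j k) T`, taking weighted sums, and applying
the activation pointwise almost everywhere. -/

def IsGraphonNet (Lnum : ℕ) (F : ℕ → ℕ) (filt : ℕ → ℕ → ℕ → ℝ → ℝ) (wt : ℕ → ℕ → ℕ → ℝ)
    (ρ : ℝ → ℝ) (T : L2 →L[ℂ] L2) (y : ℕ → ℕ → L2) : Prop :=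
  ∀ l < Lnum, ∀ j < F (l + 1),
    ⇑(y (l + 1) j) =ᵐ[μ01]
      fun v => rhoC ρ
        (((∑ k ∈ Finset.range (F l),
          (wt l j k : ℂ) • (cfc (filt l j k) T) (y l k) : L2) : ℝ → ℂ) v)

/-!
The step-function embedding `x ↦ ψ_x` intertwines `Δ` with the graphon shift operator:
averaging over the cells `P_j` recovers `x`, so `T ψ_x = ψ_{Δx}`, and hence
`ψ_{p(Δ)x} = p(T) ψ_x` for every polynomial `p`. The symmetry of `Δ` makes `T` self-adjoint.
Both sides of the claim depend Lipschitz-continuously on `h` for the sup norm on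
`σ(Δ) ∪ σ(T)`: on the matrix side because `σ(Δ)` is finite, so `h(Δ)` is a linear combination
of the values of `h` there, and on the operator side because the functional calculus is
isometric. Weierstrass approximation then carries the polynomial identity over to `h`.
-/

open Polynomial Topology
open scoped Matrix

lemma part_subset_Icc (n : ℕ) (j : Fin n) : part n j ⊆ Set.Icc 0 1 := by
  have hn : (0 : ℝ) < n := by exact_mod_cast j.pos
  have hj : (j : ℝ) + 1 ≤ n := by exact_mod_cast j.isLt
  rintro u ⟨hju, hun⟩
  exact ⟨(by positivity : (0 : ℝ) ≤ j / n).trans hju, hun.le.trans ((div_le_one hn).2 hj)⟩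

lemma measure_part (n : ℕ) (j : Fin n) : μ01 (part n j) = ENNReal.ofReal (1 / n) := by
  rw [Measure.restrict_apply (part_meas n j), Set.inter_eq_left.2 (part_subset_Icc n j), part,
    Real.volume_Ico]
  congr 1
  ring

lemma pairwise_disjoint_part (n : ℕ) : Pairwise (Function.onFun Disjoint (part n)) := by
  have hn : (0 : ℝ) ≤ n := n.cast_nonneg
  intro i j hij
  rcases lt_or_gt_of_ne (Fin.val_ne_iff.2 hij) with hlt | hlt
  · refine Set.Ico_disjoint_Ico.2 ((min_le_left _ _).trans (le_trans ?_ (le_max_right _ _)))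
    exact div_le_div_of_nonneg_right (by exact_mod_cast hlt) hn
  · refine Set.Ico_disjoint_Ico.2 ((min_le_right _ _).trans (le_trans ?_ (le_max_left _ _)))
    exact div_le_div_of_nonneg_right (by exact_mod_cast hlt) hn

theorem MeasureTheory.indicatorConstLp_smul {α E 𝕜 : Type*} {m : MeasurableSpace α}
    {μ : Measure α} {p : ENNReal} [NormedAddCommGroup E] [NormedRing 𝕜] [Module 𝕜 E]
    [IsBoundedSMul 𝕜 E] {s : Set α} {hs : MeasurableSet s} {hμs : μ s ≠ ⊤} (c : 𝕜) (e : E) :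
    indicatorConstLp p hs hμs (c • e) = c • indicatorConstLp p hs hμs e := by
  simp_rw [indicatorConstLp, ← MemLp.toLp_const_smul, Set.indicator_const_smul]
  rfl

lemma inducedSignal_add {n : ℕ} (x y : Fin n → ℂ) :
    inducedSignal (x + y) = inducedSignal x + inducedSignal y := by
  simp only [inducedSignal, ← Finset.sum_add_distrib, indicatorConstLp_add, Pi.add_apply]

lemma inducedSignal_smul {n : ℕ} {𝕜 : Type*} [NormedRing 𝕜] [Module 𝕜 ℂ] [IsBoundedSMul 𝕜 ℂ]
    (c : 𝕜) (x : Fin n → ℂ) : inducedSignal (c • x) = c • inducedSignal x := by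
  simp only [inducedSignal, Finset.smul_sum, ← indicatorConstLp_smul, Pi.smul_apply]

lemma coeFn_inducedSignal {n : ℕ} (x : Fin n → ℂ) :
    inducedSignal x =ᵐ[μ01] fun v => ∑ j, (part n j).indicator (fun _ => x j) v := by
  have hj : ∀ᵐ v ∂μ01, ∀ j : Fin n,
      indicatorConstLp 2 (part_meas n j) (part_ne_top n j) (x j) v
        = (part n j).indicator (fun _ => x j) v :=
    ae_all_iff.2 fun j => indicatorConstLp_coeFn
  filter_upwards [Lp.coeFn_fun_finsetSum Finset.univ
    fun j => indicatorConstLp 2 (part_meas n j) (part_ne_top n j) (x j), hj] with v hsum hv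
  simp only [inducedSignal, hsum, hv]

def partAverage (n : ℕ) (f : L2) (j : Fin n) : ℂ := n * ∫ u in part n j, f u ∂μ01

lemma sum_indicator_part_of_mem {n : ℕ} (y : Fin n → ℂ) {j : Fin n} {v : ℝ} (hv : v ∈ part n j) :
    ∑ k, (part n k).indicator (fun _ => y k) v = y j := by
  refine (Finset.sum_eq_single j (fun k _ hkj => Set.indicator_of_notMem ?_ _) (by simp)).trans
    (Set.indicator_of_mem hv _)
  exact Set.disjoint_left.1 (pairwise_disjoint_part n hkj.symm) hv

lemma partAverage_inducedSignal {n : ℕ} (x : Fin n → ℂ) : partAverage n (inducedSignal x) = x := by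
  funext j
  have hn : (n : ℂ) ≠ 0 := Nat.cast_ne_zero.2 j.pos.ne'
  have hconst : ∫ u in part n j, inducedSignal x u ∂μ01 = ∫ _ in part n j, x j ∂μ01 :=
    setIntegral_congr_ae (part_meas n j) <| (coeFn_inducedSignal x).mono
      fun v hv hvj => hv.trans (sum_indicator_part_of_mem x hvj)
  rw [partAverage, hconst, setIntegral_const, measureReal_def,
    measure_part, ENNReal.toReal_ofReal (by positivity), Complex.real_smul]
  push_cast
  field_simp

lemma integral_inducedGraphon_mul {n : ℕ} (B : Matrix (Fin n) (Fin n) ℝ) {f : ℝ → ℂ}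
    (hf : Integrable f μ01) (v : ℝ) :
    ∫ u, (inducedGraphon B v u : ℂ) * f u ∂μ01
      = ∑ i, (part n i).indicator (fun _ => ∑ j, (B i j : ℂ) * ∫ u in part n j, f u ∂μ01) v := by
  have hW : ∀ u, (inducedGraphon B v u : ℂ) * f u
      = ∑ i, ∑ j, (part n i).indicator (fun _ => (B i j : ℂ)) v * (part n j).indicator f u := by
    intro u
    simp only [inducedGraphon, Complex.ofReal_sum, Finset.sum_mul]
    refine Finset.sum_congr rfl fun i _ => Finset.sum_congr rfl fun j _ => ?_
    by_cases hv : v ∈ part n i <;> by_cases hu : u ∈ part n j <;> simp [hv, hu]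
  have hint : ∀ j, Integrable ((part n j).indicator f) μ01 := fun j => hf.indicator (part_meas n j)
  simp_rw [hW]
  rw [integral_finsetSum _ fun i _ => integrable_finsetSum _ fun j _ => (hint j).const_mul _]
  refine Finset.sum_congr rfl fun i _ => ?_
  rw [integral_finsetSum _ fun j _ => (hint j).const_mul _]
  by_cases hv : v ∈ part n i <;> simp [hv, integral_const_mul, integral_indicator (part_meas _ _)]

lemma IsGRSO.apply_eq {n : ℕ} {Δ : Matrix (Fin n) (Fin n) ℝ} {T : L2 →L[ℂ] L2}
    (hT : IsGRSO (inducedGraphon ((n : ℝ) • Δ)) T) (f : L2) :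
    T f = inducedSignal (Δ.map Complex.ofReal *ᵥ partAverage n f) := by
  apply Lp.ext
  filter_upwards [hT f, coeFn_inducedSignal (Δ.map Complex.ofReal *ᵥ partAverage n f)]
    with v hTv hψv
  rw [hTv, hψv, integral_inducedGraphon_mul _ ((Lp.memLp f).integrable one_le_two)]
  simp only [Matrix.mulVec, dotProduct, Matrix.map_apply, Matrix.smul_apply, partAverage,
    smul_eq_mul, Complex.ofReal_mul, Complex.ofReal_natCast, mul_assoc, mul_left_comm]

lemma IsGRSO.apply_inducedSignal {n : ℕ} {Δ : Matrix (Fin n) (Fin n) ℝ} {T : L2 →L[ℂ] L2}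
    (hT : IsGRSO (inducedGraphon ((n : ℝ) • Δ)) T) (x : Fin n → ℂ) :
    T (inducedSignal x) = inducedSignal (Δ.map Complex.ofReal *ᵥ x) := by
  rw [hT.apply_eq, partAverage_inducedSignal]

lemma inner_inducedSignal {n : ℕ} (y : Fin n → ℂ) (g : L2) :
    inner ℂ (inducedSignal y) g = ∑ j, starRingEnd ℂ (y j) * ∫ u in part n j, g u ∂μ01 := by
  rw [inducedSignal, sum_inner]
  refine Finset.sum_congr rfl fun j _ => ?_
  rw [L2.inner_indicatorConstLp_eq_inner_setIntegral ℂ (part_meas n j) (part_ne_top n j)]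
  simp [RCLike.inner_apply, mul_comm]

lemma IsGRSO.isSelfAdjoint {n : ℕ} {Δ : Matrix (Fin n) (Fin n) ℝ} (hΔ : Δ.IsSymm)
    {T : L2 →L[ℂ] L2} (hT : IsGRSO (inducedGraphon ((n : ℝ) • Δ)) T) : IsSelfAdjoint T := by
  rw [ContinuousLinearMap.isSelfAdjoint_iff_isSymmetric]
  intro f g
  simp only [ContinuousLinearMap.coe_coe]
  rw [hT.apply_eq, hT.apply_eq, inner_inducedSignal, ← inner_conj_symm, inner_inducedSignal]
  simp only [Matrix.mulVec, dotProduct, Matrix.map_apply, partAverage, map_sum, map_mul,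
    Complex.conj_conj, Complex.conj_ofReal, map_natCast, Finset.sum_mul]
  rw [Finset.sum_comm]
  refine Finset.sum_congr rfl fun j _ => Finset.sum_congr rfl fun k _ => ?_
  rw [hΔ.apply k j]
  ring

lemma inducedSignal_aeval_mulVec {n : ℕ} {Δ : Matrix (Fin n) (Fin n) ℝ} {T : L2 →L[ℂ] L2}
    (hT : ∀ y, T (inducedSignal y) = inducedSignal (Δ.map Complex.ofReal *ᵥ y)) (p : ℝ[X])
    (x : Fin n → ℂ) :
    inducedSignal ((aeval Δ p).map Complex.ofReal *ᵥ x) = aeval T p (inducedSignal x) := by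
  have hmap : ∀ M : Matrix (Fin n) (Fin n) ℝ,
      M.map Complex.ofReal = Complex.ofRealHom.mapMatrix M := fun _ => rfl
  induction p using Polynomial.induction_on generalizing x with
  | C a =>
    simp [Matrix.algebraMap_eq_diagonal, Matrix.diagonal_map, inducedSignal_smul]
  | add p q hp hq =>
    rw [map_add, map_add, hmap, map_add, Matrix.add_mulVec, ← hmap, ← hmap, inducedSignal_add, hp,
      hq, add_apply]
  | monomial k a ih =>
    rw [pow_succ, ← mul_assoc, map_mul (aeval Δ) _ X, map_mul (aeval T) _ X, aeval_X, aeval_X,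
      hmap, map_mul, ← hmap, ← hmap, ← Matrix.mulVec_mulVec, ih, mul_apply_eq_comp, hT]

def SupLipschitzOn {E : Type*} [NormedAddCommGroup E] (K : Set ℝ) (F : (ℝ → ℝ) → E) : Prop :=
  ∃ C, ∀ f g : ℝ → ℝ, Continuous f → Continuous g → ∀ ε, 0 ≤ ε →
    (∀ t ∈ K, |f t - g t| ≤ ε) → ‖F f - F g‖ ≤ C * ε

namespace SupLipschitzOn

variable {E : Type*} [NormedAddCommGroup E] {K : Set ℝ} {F G : (ℝ → ℝ) → E}

lemma mono {L : Set ℝ} (hF : SupLipschitzOn K F) (hKL : K ⊆ L) : SupLipschitzOn L F := by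
  obtain ⟨C, hC⟩ := hF
  exact ⟨C, fun f g hf hg ε hε hfg => hC f g hf hg ε hε fun t ht => hfg t (hKL ht)⟩

theorem eq_of_forall_polynomial (hK : IsCompact K) (hF : SupLipschitzOn K F)
    (hG : SupLipschitzOn K G) (hFG : ∀ p : ℝ[X], F (fun t => p.eval t) = G (fun t => p.eval t))
    {h : ℝ → ℝ} (hh : Continuous h) : F h = G h := by
  obtain ⟨C₁, hC₁⟩ := hF
  obtain ⟨C₂, hC₂⟩ := hG
  obtain ⟨R, hR⟩ := hK.isBounded.subset_closedBall 0
  have hKR : K ⊆ Set.Icc (-R) R := by simpa [Real.closedBall_eq_Icc] using hR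
  have hbound : ∀ ε > 0, ‖F h - G h‖ ≤ (C₁ + C₂) * ε := by
    intro ε hε
    obtain ⟨q, hq⟩ := exists_polynomial_near_of_continuousOn (-R) R h hh.continuousOn ε hε
    have hqK : ∀ t ∈ K, |q.eval t - h t| ≤ ε := fun t ht => (hq t (hKR ht)).le
    calc ‖F h - G h‖ = ‖(F h - F (fun t => q.eval t)) + (G (fun t => q.eval t) - G h)‖ := by
          rw [hFG q]; abel_nf
      _ ≤ C₁ * ε + C₂ * ε := norm_add_le_of_le
          (hC₁ h _ hh q.continuous ε hε.le fun t ht => abs_sub_comm (h t) _ ▸ hqK t ht)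
          (hC₂ _ h q.continuous hh ε hε.le hqK)
      _ = (C₁ + C₂) * ε := (add_mul _ _ _).symm
  have hlim : Filter.Tendsto (fun ε => (C₁ + C₂) * ε) (𝓝[>] 0) (𝓝 0) := by
    refine tendsto_nhdsWithin_of_tendsto_nhds ?_
    simpa using (continuous_const_mul (C₁ + C₂)).tendsto 0
  exact sub_eq_zero.1 (norm_le_zero_iff.1 (ge_of_tendsto hlim
    (eventually_nhdsWithin_of_forall hbound)))

end SupLipschitzOn

lemma supLipschitzOn_map_cfc_of_finite {A E : Type*} [Ring A] [StarRing A] [Algebra ℝ A]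
    [TopologicalSpace A] {p : A → Prop} [ContinuousFunctionalCalculus ℝ A p]
    [NormedAddCommGroup E] [NormedSpace ℝ E] {a : A} (ha : (spectrum ℝ a).Finite)
    (Φ : A →ₗ[ℝ] E) : SupLipschitzOn (spectrum ℝ a) (fun f => Φ (cfc f a)) := by
  classical
  set S := ha.toFinset
  let e : ℝ → ℝ → ℝ := fun s t => if t = s then 1 else 0
  refine ⟨∑ s ∈ S, ‖Φ (cfc (e s) a)‖, fun f g _ _ ε _ hfg => ?_⟩
  have hdecomp : cfc f a - cfc g a = ∑ s ∈ S, (f s - g s) • cfc (e s) a := by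
    have hsum : (spectrum ℝ a).EqOn (fun t => f t - g t) (∑ s ∈ S, fun t => (f s - g s) * e s t) :=
      fun t ht => by simp [e, S, ht]
    rw [← cfc_sub f g a (ha.continuousOn f) (ha.continuousOn g), cfc_congr hsum,
      cfc_sum _ _ _ fun s _ => ha.continuousOn _]
    exact Finset.sum_congr rfl fun s _ => cfc_const_mul _ _ _ (ha.continuousOn _)
  calc ‖Φ (cfc f a) - Φ (cfc g a)‖ = ‖∑ s ∈ S, (f s - g s) • Φ (cfc (e s) a)‖ := by
        simp only [← map_sub, hdecomp, map_sum, map_smul]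
    _ ≤ ∑ s ∈ S, ε * ‖Φ (cfc (e s) a)‖ := by
        refine norm_sum_le_of_le _ fun s hs => ?_
        rw [norm_smul, Real.norm_eq_abs]
        exact mul_le_mul_of_nonneg_right (hfg s (ha.mem_toFinset.1 hs)) (norm_nonneg _)
    _ = (∑ s ∈ S, ‖Φ (cfc (e s) a)‖) * ε := by rw [← Finset.mul_sum, mul_comm]

lemma supLipschitzOn_cfc_apply (T : L2 →L[ℂ] L2) (y : L2) :
    SupLipschitzOn (spectrum ℝ T) (fun f => cfc f T y) := by
  refine ⟨‖y‖, fun f g hf hg ε hε hfg => ?_⟩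
  rw [← sub_apply, ← cfc_sub f g T hf.continuousOn hg.continuousOn, mul_comm]
  refine (ContinuousLinearMap.le_opNorm _ _).trans (mul_le_mul_of_nonneg_right ?_ (norm_nonneg _))
  exact norm_cfc_le hε fun t ht => hfg t ht

def inducedSignalMulVec {n : ℕ} (x : Fin n → ℂ) : Matrix (Fin n) (Fin n) ℝ →ₗ[ℝ] L2 where
  toFun M := inducedSignal (M.map Complex.ofReal *ᵥ x)
  map_add' M N := by
    rw [Matrix.map_add _ Complex.ofReal_add, Matrix.add_mulVec, inducedSignal_add]
  map_smul' c M := by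
    rw [RingHom.id_apply, ← inducedSignal_smul, ← Matrix.smul_mulVec]
    congr 2
    ext i j
    simp

/-- For symmetric `Δ` with GWM `A = nΔ` and continuous `h : ℝ → ℝ`, for every
signal `x ∈ ℂⁿ` one has `ψ_{h(Δ)x} = h(T_{W_A}) ψ_x` in `L²[0,1]`. -/
theorem statement3 (n : ℕ) (Δ : Matrix (Fin n) (Fin n) ℝ) (hΔ : Δ.IsSymm)
    (h : ℝ → ℝ) (hh : Continuous h)
    (T : L2 →L[ℂ] L2) (hT : IsGRSO (inducedGraphon ((n : ℝ) • Δ)) T)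
    (x : Fin n → ℂ) :
    inducedSignal (((cfc h Δ).map Complex.ofReal).mulVec x) = cfc h T (inducedSignal x) := by
  have hΔsa : IsSelfAdjoint Δ := Matrix.isHermitian_iff_isSymm.2 hΔ
  have hTsa : IsSelfAdjoint T := hT.isSelfAdjoint hΔ
  have hfin : (spectrum ℝ Δ).Finite :=
    hΔsa.isHermitian.spectrum_real_eq_range_eigenvalues ▸ Set.finite_range _
  have hK : IsCompact (spectrum ℝ Δ ∪ spectrum ℝ T) :=
    (ContinuousFunctionalCalculus.isCompact_spectrum Δ).union
      (ContinuousFunctionalCalculus.isCompact_spectrum T)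
  refine SupLipschitzOn.eq_of_forall_polynomial hK
    ((supLipschitzOn_map_cfc_of_finite hfin (inducedSignalMulVec x)).mono Set.subset_union_left)
    ((supLipschitzOn_cfc_apply T _).mono Set.subset_union_right) (fun p => ?_) hh
  simp only [inducedSignalMulVec, LinearMap.coe_mk, AddHom.coe_mk]
  rw [cfc_polynomial p Δ hΔsa, cfc_polynomial p T hTsa]
  exact inducedSignal_aeval_mulVec hT.apply_inducedSignal p x
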